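/- arXiv:2605.28059 — 4 statements merged into one kernel-verified Lean document; each statement's English description precedes it below -/
import Mathlib

section
/- There exists a constant C > 0 such that for all z in (0, 1/4], the principal BDF2 characteristic root r1(z) = (2 + sqrt(1-2z))/(3+2z) satisfies |e^{-z} - r1(z)| ≤ C z^3. -/
noncomputable def r1 (z : ℝ) : ℝ := (2 + Real.sqrt (1 - 2 * z)) / (3 + 2 * z)

theorem bdf2_second_order :
    ∃ C : ℝ, 0 < C ∧ ∀ z : ℝ, 0 < z → z ≤ 1 / 4 →
      |Real.exp (-z) - r1 z| ≤ C * z ^ 3 := by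
  refine ⟨1, one_pos, fun z hz hz4 => ?_⟩
  set s := Real.sqrt (1 - 2 * z) with hsdef
  have h1 : (0:ℝ) ≤ 1 - 2 * z := by linarith
  have hs2 : s ^ 2 = 1 - 2 * z := Real.sq_sqrt h1
  have hs0 : 0 ≤ s := Real.sqrt_nonneg _
  -- upper bound: s ≤ 1 - z - z²/2
  have hup : s ≤ 1 - z - z ^ 2 / 2 := by
    have h2 : (1 - 2 * z) ≤ (1 - z - z ^ 2 / 2) ^ 2 := by nlinarith [pow_pos hz 3, pow_pos hz 4]
    calc s ≤ Real.sqrt ((1 - z - z ^ 2 / 2) ^ 2) := Real.sqrt_le_sqrt h2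
    _ = 1 - z - z ^ 2 / 2 := Real.sqrt_sq (by nlinarith)
  -- lower bound: s ≥ 1 - 2z
  have hlo : 1 - 2 * z ≤ s := by
    have h2 : (1 - 2 * z) ^ 2 ≤ 1 - 2 * z := by nlinarith
    calc (1 : ℝ) - 2 * z = Real.sqrt ((1 - 2 * z) ^ 2) := (Real.sqrt_sq h1).symm
    _ ≤ s := Real.sqrt_le_sqrt h2
  -- cubic bound on the sqrt error
  have hE : 1 - z - z ^ 2 / 2 - s ≤ (17 / 16) * z ^ 3 := by
    have hps : 1 ≤ (1 - z - z ^ 2 / 2) + s := by nlinarith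
    have hprod : ((1 - z - z ^ 2 / 2) - s) * ((1 - z - z ^ 2 / 2) + s)
        = z ^ 3 + z ^ 4 / 4 := by nlinarith [hs2]
    nlinarith [pow_pos hz 3, pow_pos hz 4]
  -- exp bound
  have habs : |(-z)| ≤ 1 := by rw [abs_of_nonpos (by linarith)]; linarith
  have hexp := Real.exp_bound habs (by norm_num : 0 < 3)
  have hexp' : |Real.exp (-z) - (1 - z + z ^ 2 / 2)| ≤ z ^ 3 * (2 / 9) := by
    have hsum : ∑ i ∈ Finset.range 3, (-z) ^ i / (i.factorial : ℝ)
        = 1 - z + z ^ 2 / 2 := by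
      simp [Finset.sum_range_succ, Nat.factorial]
      ring
    have habsz : |(-z)| = z := by rw [abs_of_nonpos (by linarith)]; ring
    rw [hsum, habsz] at hexp
    calc |Real.exp (-z) - (1 - z + z ^ 2 / 2)| ≤ z ^ 3 * (4 / ((Nat.factorial 3 : ℝ) * 3)) := by
          simpa using hexp
    _ = z ^ 3 * (2 / 9) := by norm_num [Nat.factorial]
  -- algebraic identity
  have hd : (0:ℝ) < 3 + 2 * z := by linarith
  have key : Real.exp (-z) - r1 z
      = (Real.exp (-z) - (1 - z + z ^ 2 / 2))
        + ((1 - z - z ^ 2 / 2 - s) + z ^ 3) / (3 + 2 * z) := by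
    rw [r1, ← hsdef]
    field_simp
    ring
  rw [key]
  have hBnonneg : 0 ≤ ((1 - z - z ^ 2 / 2 - s) + z ^ 3) / (3 + 2 * z) := by
    apply div_nonneg _ hd.le
    nlinarith [pow_pos hz 3]
  have hB : ((1 - z - z ^ 2 / 2 - s) + z ^ 3) / (3 + 2 * z) ≤ (11 / 16) * z ^ 3 := by
    rw [div_le_iff₀ hd]
    nlinarith [pow_pos hz 3]
  calc |(Real.exp (-z) - (1 - z + z ^ 2 / 2))
        + ((1 - z - z ^ 2 / 2 - s) + z ^ 3) / (3 + 2 * z)|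
      ≤ |Real.exp (-z) - (1 - z + z ^ 2 / 2)|
        + |((1 - z - z ^ 2 / 2 - s) + z ^ 3) / (3 + 2 * z)| := abs_add_le _ _
    _ ≤ z ^ 3 * (2 / 9) + (11 / 16) * z ^ 3 := by
        rw [abs_of_nonneg hBnonneg]; exact add_le_add hexp' hB
    _ ≤ 1 * z ^ 3 := by nlinarith [pow_pos hz 3]
end

section
/- For 1/4 ≤ z < 1/2 and every natural number J ≥ 1, the BDF2 propagator coefficients satisfy |F1(z,J)| + |F2(z,J)| ≤ 30 · (0.8)^{J+1}, where F1(z,J) = r1 r2 (r2^J - r1^J)/(r1 - r2) and F2(z,J) = (r1^{J+1} - r2^{J+1})/(r1 - r2) with r1, r2 the BDF2 characteristic roots. -/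
noncomputable def r2 (z : ℝ) : ℝ := (2 - Real.sqrt (1 - 2 * z)) / (3 + 2 * z)

noncomputable def F1 (z : ℝ) (J : ℕ) : ℝ :=
  r1 z * r2 z * ((r2 z) ^ J - (r1 z) ^ J) / (r1 z - r2 z)

noncomputable def F2 (z : ℝ) (J : ℕ) : ℝ :=
  ((r1 z) ^ (J + 1) - (r2 z) ^ (J + 1)) / (r1 z - r2 z)

/-- Second-order Bernoulli / binomial bound. -/
lemma binom2_aux (x : ℝ) (hx : 0 ≤ x) :
    ∀ n : ℕ, 1 + n * x + n * (n - 1) / 2 * x ^ 2 ≤ (1 + x) ^ n := by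
  intro n
  induction n with
  | zero => norm_num
  | succ k ih =>
    have h1 : (0:ℝ) ≤ (1 + x) ^ k := by positivity
    have hk : (0:ℝ) ≤ (k:ℝ) := Nat.cast_nonneg k
    push_cast
    push_cast at ih
    calc 1 + ((k:ℝ) + 1) * x + ((k:ℝ) + 1) * ((k:ℝ) + 1 - 1) / 2 * x ^ 2
        ≤ (1 + (k:ℝ) * x + (k:ℝ) * ((k:ℝ) - 1) / 2 * x ^ 2) * (1 + x) := by
          have hkk : 0 ≤ (k:ℝ) * ((k:ℝ) - 1) := by
            rcases Nat.eq_zero_or_pos k with h | h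
            · simp [h]
            · have : (1:ℝ) ≤ (k:ℝ) := by exact_mod_cast h
              nlinarith
          nlinarith [mul_nonneg hkk (pow_nonneg hx 3)]
      _ ≤ (1 + x) ^ k * (1 + x) := by nlinarith
      _ = (1 + x) ^ (k + 1) := by ring

/-- The key numeric estimate. -/
lemma key_numeric (K : ℕ) :
    ((774/1000:ℝ)) ^ K * (((K:ℝ) + 2) * (774/1000) + (2/7) * ((K:ℝ) + 1))
      ≤ (96/5) * (4/5:ℝ) ^ K := by
  have ha : (0:ℝ) ≤ 13/387 := by norm_num
  have hb := binom2_aux (13/387) ha K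
  have hq : (0:ℝ) < (774/1000:ℝ) ^ K := by positivity
  have h45 : (4/5:ℝ) ^ K = (774/1000:ℝ) ^ K * (1 + 13/387) ^ K := by
    rw [← mul_pow]; norm_num
  rw [h45]
  have hk : (0:ℝ) ≤ (K:ℝ) := Nat.cast_nonneg K
  have hKK : ((K:ℝ) + 2) * (774/1000) + (2/7) * ((K:ℝ) + 1)
      ≤ (96/5:ℝ) * (1 + (K:ℝ) * (13/387) + (K:ℝ) * ((K:ℝ) - 1) / 2 * (13/387) ^ 2) := by
    nlinarith [sq_nonneg ((K:ℝ) - 20)]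
  calc (774/1000:ℝ) ^ K * (((K:ℝ) + 2) * (774/1000) + (2/7) * ((K:ℝ) + 1))
      ≤ (774/1000:ℝ) ^ K * ((96/5) * (1 + (K:ℝ) * (13/387) + (K:ℝ) * ((K:ℝ) - 1) / 2 * (13/387) ^ 2)) := by
        exact mul_le_mul_of_nonneg_left hKK hq.le
      _ ≤ (774/1000:ℝ) ^ K * ((96/5) * (1 + 13/387) ^ K) := by
        apply mul_le_mul_of_nonneg_left _ hq.le
        nlinarith
      _ = (96/5) * ((774/1000:ℝ) ^ K * (1 + 13/387) ^ K) := by ring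

theorem bdf2_propagator_decay (z : ℝ) (hz0 : 1 / 4 ≤ z) (hz1 : z < 1 / 2)
    (J : ℕ) (hJ : 1 ≤ J) :
    |F1 z J| + |F2 z J| ≤ 30 * (0.8 : ℝ) ^ (J + 1) := by
  obtain ⟨K, rfl⟩ : ∃ K, J = K + 1 := ⟨J - 1, (Nat.succ_pred_eq_of_pos hJ).symm⟩
  set s := Real.sqrt (1 - 2 * z) with hs_def
  have h12 : (0:ℝ) < 1 - 2 * z := by linarith
  have hs2 : s ^ 2 = 1 - 2 * z := Real.sq_sqrt h12.le
  have hs_pos : 0 < s := Real.sqrt_pos.mpr h12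
  have hs_ub : s ≤ 708/1000 := by
    nlinarith [hs_pos]
  have hden : (0:ℝ) < 3 + 2 * z := by linarith
  have hden' : (7/2:ℝ) ≤ 3 + 2 * z := by linarith
  have hs1 : s < 1 := by linarith
  -- root bounds
  have hr1pos : 0 < r1 z := by
    rw [r1]; positivity
  have hr2pos : 0 < r2 z := by
    rw [r2]; apply div_pos (by linarith) hden
  have hr1ub : r1 z ≤ 774/1000 := by
    rw [r1, div_le_iff₀ hden]; nlinarith
  have hr2ub : r2 z ≤ 774/1000 := by
    rw [r2, div_le_iff₀ hden]; nlinarith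
  have hprod : r1 z * r2 z ≤ 2/7 := by
    have key : (2 + s) * (2 - s) = 3 + 2 * z := by nlinarith [hs2]
    have : r1 z * r2 z = 1 / (3 + 2 * z) := by
      rw [r1, r2, div_mul_div_comm, key]
      rw [div_eq_div_iff (by positivity) hden.ne']
      ring
    rw [this]
    rw [div_le_iff₀ hden]; linarith
  have hne : r1 z - r2 z ≠ 0 := by
    have : r1 z - r2 z = 2 * s / (3 + 2 * z) := by rw [r1, r2]; ring
    rw [this]; positivity
  set q : ℝ := 774/1000 with hq_def
  have hqpos : (0:ℝ) < q := by norm_num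
  -- generic sum bound
  have sum_bound : ∀ n : ℕ, |∑ i ∈ Finset.range (n+1), r1 z ^ i * r2 z ^ (n - i)|
      ≤ ((n:ℝ) + 1) * q ^ n := by
    intro n
    calc |∑ i ∈ Finset.range (n+1), r1 z ^ i * r2 z ^ (n - i)|
        ≤ ∑ i ∈ Finset.range (n+1), |r1 z ^ i * r2 z ^ (n - i)| :=
          Finset.abs_sum_le_sum_abs _ _
      _ ≤ (Finset.range (n+1)).card • (q ^ n) := by
          apply Finset.sum_le_card_nsmul
          intro i hi
          have hiJ : i ≤ n := Nat.lt_succ_iff.mp (Finset.mem_range.mp hi)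
          have h1 : |r1 z ^ i * r2 z ^ (n - i)| = r1 z ^ i * r2 z ^ (n - i) := by
            apply abs_of_nonneg; positivity
          rw [h1]
          calc r1 z ^ i * r2 z ^ (n - i) ≤ q ^ i * q ^ (n - i) := by
                apply mul_le_mul (pow_le_pow_left₀ hr1pos.le hr1ub i)
                  (pow_le_pow_left₀ hr2pos.le hr2ub _) (by positivity) (by positivity)
            _ = q ^ (i + (n - i)) := (pow_add q i (n-i)).symm
            _ = q ^ n := by rw [Nat.add_sub_cancel' hiJ]
      _ = ((n:ℝ) + 1) * q ^ n := by
          rw [Finset.card_range, nsmul_eq_mul]; push_cast; ring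
  -- F2 identity and bound
  have hF2 : F2 z (K+1) = ∑ i ∈ Finset.range (K+2), r1 z ^ i * r2 z ^ (K + 1 - i) := by
    rw [F2, div_eq_iff hne, ← geom_sum₂_mul (r1 z) (r2 z) (K+2)]
    congr 1
  have hF2b : |F2 z (K+1)| ≤ ((K:ℝ) + 2) * q ^ (K+1) := by
    rw [hF2]
    have := sum_bound (K+1)
    push_cast at this ⊢
    convert this using 2 <;> push_cast <;> ring
  -- F1 identity and bound
  have hF1 : F1 z (K+1) = -(r1 z * r2 z) * ∑ i ∈ Finset.range (K+1), r1 z ^ i * r2 z ^ (K - i) := by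
    rw [F1, div_eq_iff hne]
    have h := geom_sum₂_mul (r1 z) (r2 z) (K+1)
    simp only [Nat.add_sub_cancel] at h
    linear_combination (r1 z * r2 z) * h
  have hF1b : |F1 z (K+1)| ≤ (2/7) * (((K:ℝ) + 1) * q ^ K) := by
    rw [hF1, abs_mul, abs_neg]
    have h1 : |r1 z * r2 z| ≤ 2/7 := by
      rw [abs_of_nonneg (by positivity)]; exact hprod
    have h2 := sum_bound K
    apply mul_le_mul h1 h2 (abs_nonneg _) (by norm_num)
  -- combine
  have hcomb : ((K:ℝ) + 2) * q ^ (K+1) + (2/7) * (((K:ℝ) + 1) * q ^ K)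
      ≤ 30 * (0.8:ℝ) ^ (K + 1 + 1) := by
    have hk := key_numeric K
    have h08 : (0.8:ℝ) = 4/5 := by norm_num
    rw [h08]
    have : (30:ℝ) * (4/5) ^ (K + 1 + 1) = (96/5) * (4/5) ^ K := by
      rw [pow_succ, pow_succ]; ring
    rw [this]
    calc ((K:ℝ) + 2) * q ^ (K+1) + (2/7) * (((K:ℝ) + 1) * q ^ K)
        = q ^ K * (((K:ℝ) + 2) * q + (2/7) * ((K:ℝ) + 1)) := by rw [pow_succ]; ring
      _ ≤ (96/5) * (4/5:ℝ) ^ K := hk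
  calc |F1 z (K+1)| + |F2 z (K+1)|
      ≤ (2/7) * (((K:ℝ) + 1) * q ^ K) + ((K:ℝ) + 2) * q ^ (K+1) := add_le_add hF1b hF2b
    _ ≤ 30 * (0.8:ℝ) ^ (K + 1 + 1) := by linarith
end

section
/- Let R(s) = P(s)/Q(s) be a rational function with deg P ≤ deg Q, with Q nonvanishing on [0,∞), R(0) = 1, and R(s) > 0 for s ≥ 0. Then there exists a constant C > 0, independent of J and z, such that for all z ≥ 0 and all integers J ≥ 10, |R((J-1)z)/R(Jz) - 1| ≤ C/J. -/
/-!
On `[0, ∞)` neither `P` nor `Q` vanishes, so there `log R = log P - log Q` (with Mathlib's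
`log x = log |x|`) and `s (log R)'(s) = s P'(s) / P(s) - s Q'(s) / Q(s)`. Each term is a continuous
rational function whose numerator has degree at most that of its denominator, hence bounded on
`[0, ∞)`, say by `M` in total. By the mean value theorem `log R` then changes by at most
`M z / ((J - 1) z)` between `(J - 1) z` and `J z`, and exponentiating gives `O(1 / J)`.
-/

open Polynomial Set Filter Topology Real

lemma Polynomial.degree_X_mul_derivative_le {R : Type*} [Semiring R] [Nontrivial R] (p : R[X]) :
    (X * derivative p).degree ≤ p.degree := by
  rcases eq_or_ne p 0 with rfl | hp
  · simp
  · rw [X_mul, degree_mul_X]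
    exact Nat.WithBot.add_one_le_of_lt (degree_derivative_lt hp)

lemma exists_norm_le_of_continuousOn_Ici_of_tendsto {E : Type*} [SeminormedAddCommGroup E]
    {f : ℝ → E} {a : ℝ} {c : E} (hf : ContinuousOn f (Ici a)) (hc : Tendsto f atTop (𝓝 c)) :
    ∃ M, ∀ s ∈ Ici a, ‖f s‖ ≤ M := by
  obtain ⟨t, ht⟩ := eventually_atTop.1 (hc.norm.eventually (eventually_le_nhds (lt_add_one ‖c‖)))
  obtain ⟨B, hB⟩ := isCompact_Icc.exists_bound_of_continuousOn
    (hf.mono (Icc_subset_Ici_self : Icc a (max a t) ⊆ Ici a))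
  refine ⟨max B (‖c‖ + 1), fun s hs => ?_⟩
  rcases le_total s (max a t) with h | h
  · exact (hB s ⟨hs, h⟩).trans (le_max_left _ _)
  · exact (ht s (le_of_max_le_right h)).trans (le_max_right _ _)

namespace Polynomial

lemma exists_abs_eval_div_le_of_degree_le {N D : ℝ[X]} {a : ℝ} (hdeg : N.degree ≤ D.degree)
    (hD : ∀ s ∈ Ici a, D.eval s ≠ 0) : ∃ M, ∀ s ∈ Ici a, |N.eval s / D.eval s| ≤ M := by
  have hcont : ContinuousOn (fun s => N.eval s / D.eval s) (Ici a) :=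
    N.continuousOn.div D.continuousOn hD
  obtain ⟨c, hc⟩ : ∃ c, Tendsto (fun s => N.eval s / D.eval s) atTop (𝓝 c) := by
    rcases hdeg.lt_or_eq with h | h
    · exact ⟨0, N.div_tendsto_atTop_zero_of_degree_lt D h⟩
    · exact ⟨_, N.div_tendsto_atTop_leadingCoeff_div_of_degree_eq D h⟩
  exact exists_norm_le_of_continuousOn_Ici_of_tendsto hcont hc

lemma exists_abs_mul_eval_derivative_div_le {p : ℝ[X]} {a : ℝ} (hp : ∀ s ∈ Ici a, p.eval s ≠ 0) :
    ∃ M, ∀ s ∈ Ici a, |s * (derivative p).eval s / p.eval s| ≤ M := by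
  simpa only [eval_mul, eval_X] using
    exists_abs_eval_div_le_of_degree_le (degree_X_mul_derivative_le p) hp

end Polynomial

lemma abs_sub_le_of_abs_mul_deriv_le {f f' : ℝ → ℝ} {a b M : ℝ} (ha : 0 < a) (hab : a ≤ b)
    (hf : ∀ s ∈ Icc a b, HasDerivAt f (f' s) s) (hM : ∀ s ∈ Icc a b, |s * f' s| ≤ M) :
    |f b - f a| ≤ M / a * (b - a) := by
  have hbound : ∀ s ∈ Icc a b, ‖f' s‖ ≤ M / a := by
    intro s hs
    have hs0 : 0 < s := ha.trans_le hs.1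
    have hM0 : 0 ≤ M := (abs_nonneg _).trans (hM s hs)
    calc ‖f' s‖ = |s * f' s| / s := by rw [abs_mul, abs_of_pos hs0, Real.norm_eq_abs]; field_simp
      _ ≤ M / s := by gcongr; exact hM s hs
      _ ≤ M / a := by gcongr; exact hs.1
  simpa [Real.norm_eq_abs, abs_of_nonneg (sub_nonneg.2 hab)] using
    (convex_Icc a b).norm_image_sub_le_of_norm_hasDerivWithin_le
      (fun s hs => (hf s hs).hasDerivWithinAt) hbound (left_mem_Icc.2 hab) (right_mem_Icc.2 hab)

lemma Real.exp_sub_one_le_mul_exp (x : ℝ) : exp x - 1 ≤ x * exp x := by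
  have h := mul_le_mul_of_nonneg_right (add_one_le_exp (-x)) (exp_pos x).le
  rw [exp_neg, inv_mul_cancel₀ (exp_pos x).ne'] at h
  linarith

lemma Real.abs_exp_sub_one_le_mul_exp_abs (x : ℝ) : |exp x - 1| ≤ |x| * exp |x| := by
  rw [abs_le]
  constructor
  · calc -(|x| * exp |x|) ≤ -|x| :=
        neg_le_neg (le_mul_of_one_le_right (abs_nonneg x) (one_le_exp (abs_nonneg x)))
      _ ≤ x := neg_abs_le x
      _ ≤ exp x - 1 := by linarith [add_one_le_exp x]
  · calc exp x - 1 ≤ x * exp x := exp_sub_one_le_mul_exp x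
      _ ≤ |x| * exp |x| :=
        mul_le_mul (le_abs_self x) (exp_le_exp.2 (le_abs_self x)) (exp_pos x).le (abs_nonneg x)

lemma abs_exp_sub_sub_one_le_of_abs_mul_deriv_le {f f' : ℝ → ℝ} {M J z : ℝ}
    (hf : ∀ s, 0 < s → HasDerivAt f (f' s) s) (hM : ∀ s, 0 < s → |s * f' s| ≤ M)
    (hJ : 10 ≤ J) (hz : 0 ≤ z) :
    |exp (f ((J - 1) * z) - f (J * z)) - 1| ≤ 10 / 9 * M * exp (M / 9) / J := by
  have hM0 : 0 ≤ M := (abs_nonneg _).trans (hM 1 one_pos)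
  rcases hz.eq_or_lt with rfl | hz
  · simp only [mul_zero, sub_self, exp_zero, abs_zero]
    positivity
  have ha : 0 < (J - 1) * z := mul_pos (by linarith) hz
  have hd : |f ((J - 1) * z) - f (J * z)| ≤ M / (J - 1) := by
    have := abs_sub_le_of_abs_mul_deriv_le ha (show (J - 1) * z ≤ J * z by linarith)
      (fun s hs => hf s (ha.trans_le hs.1)) (fun s hs => hM s (ha.trans_le hs.1))
    rwa [abs_sub_comm, show J * z - (J - 1) * z = z by ring, div_mul_eq_mul_div, mul_div_assoc,
      div_mul_cancel_right₀ hz.ne', ← div_eq_mul_inv] at this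
  have hd9 : M / (J - 1) ≤ M / 9 := div_le_div_of_nonneg_left hM0 (by norm_num) (by linarith)
  calc |exp (f ((J - 1) * z) - f (J * z)) - 1|
      ≤ M / (J - 1) * exp (M / 9) :=
        (abs_exp_sub_one_le_mul_exp_abs _).trans
          (mul_le_mul hd (exp_le_exp.2 (hd.trans hd9)) (exp_pos _).le
            (div_nonneg hM0 (by linarith)))
    _ ≤ 10 / 9 * M * exp (M / 9) / J := by
        rw [div_mul_eq_mul_div, div_le_div_iff₀ (by linarith) (by linarith)]
        nlinarith [mul_nonneg (mul_nonneg hM0 (exp_pos (M / 9)).le) (by linarith : (0:ℝ) ≤ J - 10)]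

theorem rational_stability_ratio_bound_general (P Q : Polynomial ℝ)
    (R : ℝ → ℝ) (hR : ∀ s : ℝ, R s = P.eval s / Q.eval s)
    (hRpos : ∀ s : ℝ, 0 ≤ s → 0 < R s) :
    ∃ C : ℝ, 0 < C ∧ ∀ z : ℝ, 0 ≤ z → ∀ J : ℕ, 10 ≤ J →
      |R (((J : ℝ) - 1) * z) / R ((J : ℝ) * z) - 1| ≤ C / J := by
  have hPQ (s : ℝ) (hs : 0 ≤ s) : P.eval s ≠ 0 ∧ Q.eval s ≠ 0 :=
    div_ne_zero_iff.1 (hR s ▸ (hRpos s hs).ne')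
  obtain ⟨MP, hMP⟩ := exists_abs_mul_eval_derivative_div_le fun s hs => (hPQ s hs).1
  obtain ⟨MQ, hMQ⟩ := exists_abs_mul_eval_derivative_div_le fun s hs => (hPQ s hs).2
  set L := fun s => log (P.eval s) - log (Q.eval s)
  have hRL (s : ℝ) (hs : 0 ≤ s) : R s = exp (L s) := by
    show R s = exp (log _ - log _)
    rw [← log_div (hPQ s hs).1 (hPQ s hs).2, ← hR, exp_log (hRpos s hs)]
  have hL (s : ℝ) (hs : 0 < s) :
      HasDerivAt L ((derivative P).eval s / P.eval s - (derivative Q).eval s / Q.eval s) s :=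
    ((P.hasDerivAt s).log (hPQ s hs.le).1).sub ((Q.hasDerivAt s).log (hPQ s hs.le).2)
  have hLM (s : ℝ) (hs : 0 < s) :
      |s * ((derivative P).eval s / P.eval s - (derivative Q).eval s / Q.eval s)|
        ≤ MP + MQ + 1 := by
    rw [mul_sub, ← mul_div_assoc, ← mul_div_assoc]
    linarith [abs_sub (s * (derivative P).eval s / P.eval s) (s * (derivative Q).eval s / Q.eval s),
      hMP s hs.le, hMQ s hs.le]
  refine ⟨10 / 9 * (MP + MQ + 1) * exp ((MP + MQ + 1) / 9), ?_, fun z hz J hJ => ?_⟩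
  · have hMP0 := (abs_nonneg _).trans (hMP 0 (le_refl (0 : ℝ)))
    have hMQ0 := (abs_nonneg _).trans (hMQ 0 (le_refl (0 : ℝ)))
    positivity
  have hJ10 : (10 : ℝ) ≤ J := by exact_mod_cast hJ
  rw [hRL _ (mul_nonneg (by linarith) hz), hRL _ (by positivity), ← exp_sub]
  exact abs_exp_sub_sub_one_le_of_abs_mul_deriv_le hL hLM hJ10 hz

theorem rational_stability_ratio_bound (P Q : Polynomial ℝ)
    (hdeg : P.degree ≤ Q.degree)
    (hQ : ∀ s : ℝ, 0 ≤ s → Q.eval s ≠ 0)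
    (R : ℝ → ℝ) (hR : ∀ s : ℝ, R s = P.eval s / Q.eval s)
    (hR0 : R 0 = 1) (hRpos : ∀ s : ℝ, 0 ≤ s → 0 < R s) :
    ∃ C : ℝ, 0 < C ∧ ∀ z : ℝ, 0 ≤ z → ∀ J : ℕ, 10 ≤ J →
      |R (((J : ℝ) - 1) * z) / R ((J : ℝ) * z) - 1| ≤ C / J :=
  rational_stability_ratio_bound_general P Q R hR hRpos
end

section
/- Let g > 0 and suppose the cubic polynomial p(ξ) = ξ^3 + (c2 - g^2) ξ^2 + c1 ξ + c0 has complex coefficients with |c2| ≤ C/J, |c1| ≤ C/J, |c0| ≤ C/J^2 for constants C > 0 and an integer J. Then there exist constants D > 0 and J0 such that for all J ≥ J0, p has exactly one root in the closed disk |ξ - g^2| ≤ D/J. -/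
/-!
Write `w = g²`. For `ξ ≠ 0` the cubic equals `ξ² (ξ - T ξ)` with `T ξ = w - c₂ - c₁ / ξ - c₀ / ξ²`,
so its roots in a disk about `w` that avoids `0` are the fixed points of `T` there. When the
coefficients are of size `ε = C / J`, the map `T` sends the closed disk of radius `O(ε)` about `w`
into itself and is a contraction on it, so the Banach fixed point theorem gives exactly one root
in that disk. This replaces the Rouché comparison of the cubic with `ξ³ - g² ξ²`.
-/

open Metric Set Filter Function NNReal

theorem existsUnique_isFixedPt_of_mapsTo_of_lipschitzOnWith {α : Type*} [MetricSpace α]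
    {K : ℝ≥0} {f : α → α} {s : Set α} (hK : K < 1) (hsc : IsComplete s) (hs : s.Nonempty)
    (hsf : MapsTo f s s) (hf : LipschitzOnWith K f s) : ∃! x, x ∈ s ∧ IsFixedPt f x := by
  obtain ⟨x₀, hx₀⟩ := hs
  have hcontr : ContractingWith K (hsf.restrict f s s) := ⟨hK, hf.mapsToRestrict hsf⟩
  obtain ⟨x, hx, hfx, -⟩ := hcontr.exists_fixedPoint' hsc hsf hx₀ (edist_ne_top _ _)
  refine ⟨x, ⟨hx, hfx⟩, fun y ⟨hy, hfy⟩ => ?_⟩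
  exact congrArg Subtype.val <|
    hcontr.fixedPoint_unique' (x := ⟨y, hy⟩) (y := ⟨x, hx⟩) (Subtype.ext hfy) (Subtype.ext hfx)

theorem half_norm_le_norm_of_mem_closedBall {E : Type*} [SeminormedAddCommGroup E] {w ξ : E}
    {r : ℝ} (hr : r ≤ ‖w‖ / 2) (hξ : ξ ∈ closedBall w r) : ‖w‖ / 2 ≤ ‖ξ‖ := by
  have := norm_sub_norm_le w ξ
  rw [mem_closedBall_iff_norm] at hξ
  rw [norm_sub_rev] at this
  linarith

theorem ne_zero_of_mem_closedBall_of_le_half_norm {E : Type*} [NormedAddCommGroup E] {w ξ : E}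
    {r : ℝ} (hw : w ≠ 0) (hr : r ≤ ‖w‖ / 2) (hξ : ξ ∈ closedBall w r) : ξ ≠ 0 :=
  norm_pos_iff.1 <| (half_pos (norm_pos_iff.2 hw)).trans_le
    (half_norm_le_norm_of_mem_closedBall hr hξ)

noncomputable def cubicFixedPointMap (w c₀ c₁ c₂ ξ : ℂ) : ℂ := w - c₂ - c₁ / ξ - c₀ / ξ ^ 2

section cubicFixedPointMap

variable {w c₀ c₁ c₂ ξ : ℂ} {r : ℝ}

theorem cubic_eq_sq_mul_sub_cubicFixedPointMap (hξ : ξ ≠ 0) :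
    ξ ^ 3 + (c₂ - w) * ξ ^ 2 + c₁ * ξ + c₀ = ξ ^ 2 * (ξ - cubicFixedPointMap w c₀ c₁ c₂ ξ) := by
  unfold cubicFixedPointMap
  field_simp
  ring

theorem cubic_eq_zero_iff_isFixedPt_cubicFixedPointMap (hξ : ξ ≠ 0) :
    ξ ^ 3 + (c₂ - w) * ξ ^ 2 + c₁ * ξ + c₀ = 0 ↔ IsFixedPt (cubicFixedPointMap w c₀ c₁ c₂) ξ := by
  rw [cubic_eq_sq_mul_sub_cubicFixedPointMap hξ, mul_eq_zero, sub_eq_zero, IsFixedPt,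
    eq_comm (b := ξ)]
  simp [hξ]

theorem mapsTo_cubicFixedPointMap (hw : w ≠ 0) (hr : r ≤ ‖w‖ / 2)
    (hc : ‖c₂‖ + 2 * ‖c₁‖ / ‖w‖ + 4 * ‖c₀‖ / ‖w‖ ^ 2 ≤ r) :
    MapsTo (cubicFixedPointMap w c₀ c₁ c₂) (closedBall w r) (closedBall w r) := by
  intro ξ hξ
  have hw' : 0 < ‖w‖ := norm_pos_iff.2 hw
  have hξw := half_norm_le_norm_of_mem_closedBall hr hξ
  rw [mem_closedBall_iff_norm]
  calc ‖cubicFixedPointMap w c₀ c₁ c₂ ξ - w‖ = ‖c₂ + c₁ / ξ + c₀ / ξ ^ 2‖ := by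
        rw [← norm_neg, cubicFixedPointMap]; ring_nf
    _ ≤ ‖c₂‖ + ‖c₁‖ / ‖ξ‖ + ‖c₀‖ / ‖ξ‖ ^ 2 := by
        grw [norm_add₃_le]; simp only [norm_div, norm_pow, le_refl]
    _ ≤ ‖c₂‖ + ‖c₁‖ / (‖w‖ / 2) + ‖c₀‖ / (‖w‖ / 2) ^ 2 := by gcongr
    _ = ‖c₂‖ + 2 * ‖c₁‖ / ‖w‖ + 4 * ‖c₀‖ / ‖w‖ ^ 2 := by field_simp; ring
    _ ≤ r := hc

theorem lipschitzOnWith_cubicFixedPointMap {K : ℝ≥0} (hw : w ≠ 0) (hr : r ≤ ‖w‖ / 2)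
    (hK : 4 * ‖c₁‖ / ‖w‖ ^ 2 + 48 * ‖c₀‖ / ‖w‖ ^ 3 ≤ K) :
    LipschitzOnWith K (cubicFixedPointMap w c₀ c₁ c₂) (closedBall w r) := by
  refine LipschitzOnWith.of_dist_le_mul fun ξ hξ η hη => ?_
  have hw' : 0 < ‖w‖ := norm_pos_iff.2 hw
  have hξw := half_norm_le_norm_of_mem_closedBall hr hξ
  have hηw := half_norm_le_norm_of_mem_closedBall hr hη
  have hsum : ‖ξ + η‖ ≤ 3 * ‖w‖ := by
    grw [norm_add_le, norm_le_of_mem_closedBall hξ, norm_le_of_mem_closedBall hη]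
    linarith
  have hdiff : cubicFixedPointMap w c₀ c₁ c₂ ξ - cubicFixedPointMap w c₀ c₁ c₂ η =
      (c₁ / (ξ * η) + c₀ * (ξ + η) / (ξ ^ 2 * η ^ 2)) * (ξ - η) := by
    have := ne_zero_of_mem_closedBall_of_le_half_norm hw hr hξ
    have := ne_zero_of_mem_closedBall_of_le_half_norm hw hr hη
    unfold cubicFixedPointMap
    field_simp
    ring
  rw [dist_eq_norm, dist_eq_norm, hdiff, norm_mul]
  gcongr
  calc ‖c₁ / (ξ * η) + c₀ * (ξ + η) / (ξ ^ 2 * η ^ 2)‖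
      ≤ ‖c₁‖ / (‖ξ‖ * ‖η‖) + ‖c₀‖ * ‖ξ + η‖ / (‖ξ‖ ^ 2 * ‖η‖ ^ 2) := by
        grw [norm_add_le]; simp only [norm_div, norm_mul, norm_pow, le_refl]
    _ ≤ ‖c₁‖ / (‖w‖ / 2 * (‖w‖ / 2)) + ‖c₀‖ * (3 * ‖w‖) / ((‖w‖ / 2) ^ 2 * (‖w‖ / 2) ^ 2) := by
        gcongr
    _ = 4 * ‖c₁‖ / ‖w‖ ^ 2 + 48 * ‖c₀‖ / ‖w‖ ^ 3 := by field_simp; ring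
    _ ≤ K := hK

theorem existsUnique_cubic_root_mem_closedBall (hw : w ≠ 0) (hr : r ≤ ‖w‖ / 2)
    (hmaps : ‖c₂‖ + 2 * ‖c₁‖ / ‖w‖ + 4 * ‖c₀‖ / ‖w‖ ^ 2 ≤ r)
    (hK : 4 * ‖c₁‖ / ‖w‖ ^ 2 + 48 * ‖c₀‖ / ‖w‖ ^ 3 < 1) :
    ∃! ξ : ℂ, ξ ^ 3 + (c₂ - w) * ξ ^ 2 + c₁ * ξ + c₀ = 0 ∧ ‖ξ - w‖ ≤ r := by
  have hr₀ : 0 ≤ r := le_trans (by positivity) hmaps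
  obtain ⟨ξ, ⟨hξ, hfix⟩, huniq⟩ := existsUnique_isFixedPt_of_mapsTo_of_lipschitzOnWith
    (Real.toNNReal_lt_one.2 hK) isClosed_closedBall.isComplete ⟨w, mem_closedBall_self hr₀⟩
    (mapsTo_cubicFixedPointMap hw hr hmaps)
    (lipschitzOnWith_cubicFixedPointMap hw hr (Real.le_coe_toNNReal _))
  have hroot {ζ : ℂ} (hζ : ζ ∈ closedBall w r) :
      ζ ^ 3 + (c₂ - w) * ζ ^ 2 + c₁ * ζ + c₀ = 0 ↔ IsFixedPt (cubicFixedPointMap w c₀ c₁ c₂) ζ :=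
    cubic_eq_zero_iff_isFixedPt_cubicFixedPointMap
      (ne_zero_of_mem_closedBall_of_le_half_norm hw hr hζ)
  refine ⟨ξ, ⟨(hroot hξ).2 hfix, mem_closedBall_iff_norm.1 hξ⟩, fun ζ ⟨hζ, hζw⟩ => ?_⟩
  have hζw := mem_closedBall_iff_norm.2 hζw
  exact huniq ζ ⟨hζw, (hroot hζw).1 hζ⟩

end cubicFixedPointMap

theorem existsUnique_cubic_root_of_norm_coeff_le {w c₀ c₁ c₂ : ℂ} {ε : ℝ} (hw : w ≠ 0)
    (hc₂ : ‖c₂‖ ≤ ε) (hc₁ : ‖c₁‖ ≤ ε) (hc₀ : ‖c₀‖ ≤ ε)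
    (hε : ε * (1 + 2 / ‖w‖ + 4 / ‖w‖ ^ 2) ≤ ‖w‖ / 2) (hε' : ε * (4 / ‖w‖ ^ 2 + 48 / ‖w‖ ^ 3) < 1) :
    ∃! ξ : ℂ, ξ ^ 3 + (c₂ - w) * ξ ^ 2 + c₁ * ξ + c₀ = 0 ∧
      ‖ξ - w‖ ≤ ε * (1 + 2 / ‖w‖ + 4 / ‖w‖ ^ 2) := by
  refine existsUnique_cubic_root_mem_closedBall hw hε ?_ ?_
  · calc _ ≤ ε + 2 * ε / ‖w‖ + 4 * ε / ‖w‖ ^ 2 := by gcongr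
      _ = _ := by ring
  · calc _ ≤ 4 * ε / ‖w‖ ^ 2 + 48 * ε / ‖w‖ ^ 3 := by gcongr
      _ = ε * (4 / ‖w‖ ^ 2 + 48 / ‖w‖ ^ 3) := by ring
      _ < 1 := hε'

theorem rouche_one_root_near (g C : ℝ) (hg : 0 < g) (hC : 0 < C) :
    ∃ D : ℝ, 0 < D ∧ ∃ J0 : ℕ, ∀ J : ℕ, J0 ≤ J →
      ∀ c0 c1 c2 : ℂ,
        ‖c2‖ ≤ C / J → ‖c1‖ ≤ C / J →
        ‖c0‖ ≤ C / J ^ 2 →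
        ∃! ξ : ℂ,
          ξ ^ 3 + (c2 - (g : ℂ) ^ 2) * ξ ^ 2 + c1 * ξ + c0 = 0 ∧
          ‖ξ - (g : ℂ) ^ 2‖ ≤ D / J := by
  set w : ℂ := (g : ℂ) ^ 2
  have hw : w ≠ 0 := pow_ne_zero 2 (Complex.ofReal_ne_zero.2 hg.ne')
  have hw₀ : 0 < ‖w‖ := norm_pos_iff.2 hw
  refine ⟨C * (1 + 2 / ‖w‖ + 4 / ‖w‖ ^ 2), by positivity, ?_⟩
  have hCJ := tendsto_const_div_atTop_nhds_zero_nat C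
  have hsmall : ∀ᶠ J : ℕ in atTop, 1 ≤ J ∧ C / J * (1 + 2 / ‖w‖ + 4 / ‖w‖ ^ 2) ≤ ‖w‖ / 2 ∧
      C / J * (4 / ‖w‖ ^ 2 + 48 / ‖w‖ ^ 3) < 1 := by
    refine (eventually_ge_atTop 1).and (((hCJ.mul_const _).eventually (ge_mem_nhds ?_)).and
      ((hCJ.mul_const _).eventually (gt_mem_nhds ?_))) <;> simp [hw₀]
  obtain ⟨J0, hJ0⟩ := eventually_atTop.1 hsmall
  refine ⟨J0, fun J hJ c0 c1 c2 hc2 hc1 hc0 => ?_⟩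
  obtain ⟨hJ1, hε, hε'⟩ := hJ0 J hJ
  have hc0' : ‖c0‖ ≤ C / J := hc0.trans <| div_le_div_of_nonneg_left hC.le (by positivity)
    (le_self_pow₀ (by exact_mod_cast hJ1) two_ne_zero)
  rw [mul_div_right_comm]
  exact existsUnique_cubic_root_of_norm_coeff_le hw hc2 hc1 hc0' hε hε'
end
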